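/- Scaling invariance of the constrained KdV system: Let ε ≠ 0 and k1, k2 be real numbers, and let u, v : ℝ × ℝ → ℝ be smooth functions of (x,t) such that v_x = u, v_t = u_xx + 3u², u satisfies the KdV equation u_t = u_xxx + 6u u_x, and (u,v) satisfies equation (eqt) with parameters (k1,k2). Define ũ(X,T) = ε² u(εX, ε³T) and ṽ(X,T) = ε v(εX, ε³T). Then ṽ_X = ũ, ṽ_T = ũ_XX + 3ũ², ũ satisfies the KdV equation, and (ũ,ṽ) satisfies equation (eqt) with parameters (ε²k1, ε⁴k2). -/

import Mathlib

/-- Partial derivative in the first (space) variable. -/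
noncomputable def dx (f : ℝ → ℝ → ℝ) : ℝ → ℝ → ℝ := fun x t => deriv (fun x' => f x' t) x

/-- Partial derivative in the second (time) variable. -/
noncomputable def dt (f : ℝ → ℝ → ℝ) : ℝ → ℝ → ℝ := fun x t => deriv (fun t' => f x t') t

/-- The KdV equation `u_t = u_xxx + 6 u u_x`. -/
def KdV (u : ℝ → ℝ → ℝ) : Prop :=
  ∀ x t, dt u x t = dx (dx (dx u)) x t + 6 * u x t * dx u x t

/-- `v` is the potential of `u`: `v_x = u`, `v_t = u_xx + 3 u²`. -/
def Potential (u v : ℝ → ℝ → ℝ) : Prop :=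
  ∀ x t, dx v x t = u x t ∧ dt v x t = dx (dx u) x t + 3 * (u x t) ^ 2

/-- Equation (eqt): the stationary equation for the linear combination
`u_{τ5} + k1 u_{τ3} + k2 u_{τ1}` of nonautonomous symmetries of KdV. -/
def Eqt (k1 k2 : ℝ) (u v : ℝ → ℝ → ℝ) : Prop :=
  ∀ x t,
    3 * t * dx (fun x t => dx (dx (dx (dx u))) x t + 10 * u x t * dx (dx u) x t
        + 5 * (dx u x t) ^ 2 + 10 * (u x t) ^ 3) x t
    + x * dx (fun x t => dx (dx u) x t + 3 * (u x t) ^ 2) x t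
    + 4 * dx (dx u) x t + 8 * (u x t) ^ 2 + 2 * dx u x t * v x t
    + k1 * (3 * t * dx (fun x t => dx (dx u) x t + 3 * (u x t) ^ 2) x t
        + x * dx u x t + 2 * u x t)
    + k2 * (6 * t * dx u x t + 1) = 0


open Function

lemma hasDerivAt_dx' {f : ℝ → ℝ → ℝ} (hf : ContDiff ℝ (⊤ : ℕ∞) (uncurry f)) (x t : ℝ) :
    HasDerivAt (fun x' => f x' t) (fderiv ℝ (uncurry f) (x, t) (1, 0)) x := by
  have h := (hf.differentiable (by simp) (x, t)).hasFDerivAt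
  have h2 : HasDerivAt (fun x' : ℝ => ((x', t) : ℝ × ℝ)) ((1 : ℝ), (0 : ℝ)) x :=
    HasDerivAt.prodMk (hasDerivAt_id x) (hasDerivAt_const x t)
  exact h.comp_hasDerivAt x h2

lemma hasDerivAt_dt' {f : ℝ → ℝ → ℝ} (hf : ContDiff ℝ (⊤ : ℕ∞) (uncurry f)) (x t : ℝ) :
    HasDerivAt (fun t' => f x t') (fderiv ℝ (uncurry f) (x, t) (0, 1)) t := by
  have h := (hf.differentiable (by simp) (x, t)).hasFDerivAt
  have h2 : HasDerivAt (fun t' : ℝ => ((x, t') : ℝ × ℝ)) ((0 : ℝ), (1 : ℝ)) t :=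
    HasDerivAt.prodMk (hasDerivAt_const t x) (hasDerivAt_id t)
  exact h.comp_hasDerivAt t h2

lemma contDiff_dx {f : ℝ → ℝ → ℝ} (hf : ContDiff ℝ (⊤ : ℕ∞) (uncurry f)) :
    ContDiff ℝ (⊤ : ℕ∞) (uncurry (dx f)) := by
  have h : uncurry (dx f) = fun p : ℝ × ℝ => fderiv ℝ (uncurry f) p (1, 0) := by
    funext p
    exact (hasDerivAt_dx' hf p.1 p.2).deriv
  rw [h]
  exact (ContinuousLinearMap.apply ℝ ℝ ((1, 0) : ℝ × ℝ)).contDiff.comp (hf.fderiv_right (by simp))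

lemma contDiff_dt {f : ℝ → ℝ → ℝ} (hf : ContDiff ℝ (⊤ : ℕ∞) (uncurry f)) :
    ContDiff ℝ (⊤ : ℕ∞) (uncurry (dt f)) := by
  have h : uncurry (dt f) = fun p : ℝ × ℝ => fderiv ℝ (uncurry f) p (0, 1) := by
    funext p
    exact (hasDerivAt_dt' hf p.1 p.2).deriv
  rw [h]
  exact (ContinuousLinearMap.apply ℝ ℝ ((0, 1) : ℝ × ℝ)).contDiff.comp (hf.fderiv_right (by simp))

lemma dx_scale {f : ℝ → ℝ → ℝ} (hf : ContDiff ℝ (⊤ : ℕ∞) (uncurry f)) (c a b : ℝ) :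
    dx (fun X T => c * f (a * X) (b * T)) = fun X T => c * a * dx f (a * X) (b * T) := by
  funext X T
  have h2 : HasDerivAt (fun X' : ℝ => a * X') a X := by
    simpa using (hasDerivAt_id X).const_mul a
  have h3 : HasDerivAt (fun X' => f (a * X') (b * T))
      (fderiv ℝ (uncurry f) (a * X, b * T) (1, 0) * a) X :=
    (hasDerivAt_dx' hf (a * X) (b * T)).comp X h2
  have h4 := (h3.const_mul c).deriv
  have h5 : dx f (a * X) (b * T) = fderiv ℝ (uncurry f) (a * X, b * T) (1, 0) :=
    (hasDerivAt_dx' hf (a * X) (b * T)).deriv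
  show deriv _ X = _
  rw [h4, h5]
  ring

lemma dt_scale {f : ℝ → ℝ → ℝ} (hf : ContDiff ℝ (⊤ : ℕ∞) (uncurry f)) (c a b : ℝ) :
    dt (fun X T => c * f (a * X) (b * T)) = fun X T => c * b * dt f (a * X) (b * T) := by
  funext X T
  have h2 : HasDerivAt (fun T' : ℝ => b * T') b T := by
    simpa using (hasDerivAt_id T).const_mul b
  have h3 : HasDerivAt (fun T' => f (a * X) (b * T'))
      (fderiv ℝ (uncurry f) (a * X, b * T) (0, 1) * b) T :=
    (hasDerivAt_dt' hf (a * X) (b * T)).comp T h2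
  have h4 := (h3.const_mul c).deriv
  have h5 : dt f (a * X) (b * T) = fderiv ℝ (uncurry f) (a * X, b * T) (0, 1) :=
    (hasDerivAt_dt' hf (a * X) (b * T)).deriv
  show deriv _ T = _
  rw [h4, h5]
  ring

/-- Scaling invariance of the constrained KdV system. -/
theorem scaling_invariance (ε k1 k2 : ℝ) (hε : ε ≠ 0) (u v : ℝ → ℝ → ℝ)
    (hu : ContDiff ℝ (⊤ : ℕ∞) (Function.uncurry u)) (hv : ContDiff ℝ (⊤ : ℕ∞) (Function.uncurry v))
    (hpot : Potential u v) (hkdv : KdV u) (heqt : Eqt k1 k2 u v) :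
    Potential (fun X T => ε ^ 2 * u (ε * X) (ε ^ 3 * T))
      (fun X T => ε * v (ε * X) (ε ^ 3 * T)) ∧
    KdV (fun X T => ε ^ 2 * u (ε * X) (ε ^ 3 * T)) ∧
    Eqt (ε ^ 2 * k1) (ε ^ 4 * k2)
      (fun X T => ε ^ 2 * u (ε * X) (ε ^ 3 * T))
      (fun X T => ε * v (ε * X) (ε ^ 3 * T)) := by
  have hu1 : ContDiff ℝ (⊤ : ℕ∞) (Function.uncurry (dx u)) := contDiff_dx hu
  have hu2 : ContDiff ℝ (⊤ : ℕ∞) (Function.uncurry (dx (dx u))) := contDiff_dx hu1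
  have hu3 : ContDiff ℝ (⊤ : ℕ∞) (Function.uncurry (dx (dx (dx u)))) := contDiff_dx hu2
  have hu4 : ContDiff ℝ (⊤ : ℕ∞) (Function.uncurry (dx (dx (dx (dx u))))) := contDiff_dx hu3
  have e1 : dx (fun X T => ε ^ 2 * u (ε * X) (ε ^ 3 * T))
      = fun X T => ε ^ 3 * dx u (ε * X) (ε ^ 3 * T) := by
    rw [dx_scale hu]; funext X T; ring
  have e2 : dx (fun X T => ε ^ 3 * dx u (ε * X) (ε ^ 3 * T))
      = fun X T => ε ^ 4 * dx (dx u) (ε * X) (ε ^ 3 * T) := by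
    rw [dx_scale hu1]; funext X T; ring
  have e3 : dx (fun X T => ε ^ 4 * dx (dx u) (ε * X) (ε ^ 3 * T))
      = fun X T => ε ^ 5 * dx (dx (dx u)) (ε * X) (ε ^ 3 * T) := by
    rw [dx_scale hu2]; funext X T; ring
  have e4 : dx (fun X T => ε ^ 5 * dx (dx (dx u)) (ε * X) (ε ^ 3 * T))
      = fun X T => ε ^ 6 * dx (dx (dx (dx u))) (ε * X) (ε ^ 3 * T) := by
    rw [dx_scale hu3]; funext X T; ring
  have et : dt (fun X T => ε ^ 2 * u (ε * X) (ε ^ 3 * T))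
      = fun X T => ε ^ 5 * dt u (ε * X) (ε ^ 3 * T) := by
    rw [dt_scale hu]; funext X T; ring
  have ev1 : dx (fun X T => ε * v (ε * X) (ε ^ 3 * T))
      = fun X T => ε ^ 2 * dx v (ε * X) (ε ^ 3 * T) := by
    rw [dx_scale hv]; funext X T; ring
  have evt : dt (fun X T => ε * v (ε * X) (ε ^ 3 * T))
      = fun X T => ε ^ 4 * dt v (ε * X) (ε ^ 3 * T) := by
    rw [dt_scale hv]; funext X T; ring
  refine ⟨?_, ?_, ?_⟩
  · intro X T
    refine ⟨?_, ?_⟩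
    · beta_reduce
      simp only [ev1]
      linear_combination ε ^ 2 * (hpot (ε * X) (ε ^ 3 * T)).1
    · beta_reduce
      simp only [evt, e1, e2]
      linear_combination ε ^ 4 * (hpot (ε * X) (ε ^ 3 * T)).2
  · intro X T
    beta_reduce
    simp only [et, e1, e2, e3]
    linear_combination ε ^ 5 * hkdv (ε * X) (ε ^ 3 * T)
  · intro X T
    beta_reduce
    simp only [e1, e2, e3, e4]
    have hPf : ContDiff ℝ (⊤ : ℕ∞) (Function.uncurry (fun x t =>
        dx (dx (dx (dx u))) x t + 10 * u x t * dx (dx u) x t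
          + 5 * (dx u x t) ^ 2 + 10 * (u x t) ^ 3)) := by
      exact ((hu4.add ((contDiff_const.mul hu).mul hu2)).add
        (contDiff_const.mul (hu1.pow 2))).add (contDiff_const.mul (hu.pow 3))
    have hQf : ContDiff ℝ (⊤ : ℕ∞) (Function.uncurry (fun x t =>
        dx (dx u) x t + 3 * (u x t) ^ 2)) := by
      exact hu2.add (contDiff_const.mul (hu.pow 2))
    have hL : (fun x t => ε ^ 6 * dx (dx (dx (dx u))) (ε * x) (ε ^ 3 * t)
          + 10 * (ε ^ 2 * u (ε * x) (ε ^ 3 * t)) * (ε ^ 4 * dx (dx u) (ε * x) (ε ^ 3 * t))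
          + 5 * (ε ^ 3 * dx u (ε * x) (ε ^ 3 * t)) ^ 2
          + 10 * (ε ^ 2 * u (ε * x) (ε ^ 3 * t)) ^ 3)
        = fun x t => ε ^ 6 *
            (fun x t => dx (dx (dx (dx u))) x t + 10 * u x t * dx (dx u) x t
              + 5 * (dx u x t) ^ 2 + 10 * (u x t) ^ 3) (ε * x) (ε ^ 3 * t) := by
      funext x t; beta_reduce; ring
    have hM : (fun x t => ε ^ 4 * dx (dx u) (ε * x) (ε ^ 3 * t)
          + 3 * (ε ^ 2 * u (ε * x) (ε ^ 3 * t)) ^ 2)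
        = fun x t => ε ^ 4 *
            (fun x t => dx (dx u) x t + 3 * (u x t) ^ 2) (ε * x) (ε ^ 3 * t) := by
      funext x t; beta_reduce; ring
    rw [hL, hM, dx_scale hPf, dx_scale hQf]
    beta_reduce
    linear_combination ε ^ 4 * heqt (ε * X) (ε ^ 3 * T)
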